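/- Let 0 < ε ≤ 1, let x be a vertex with μ(x) ≥ 1/n (n the number of vertices, W the maximum edge weight), let t be an integer with t ≥ 7·n²·W/ε, and let Ŵ be an n×n matrix with D^t[x,y] ≤ Ŵ[x,y] ≤ (1 + ε/7)·D^t[x,y] for all y. Then μ̂(x) := (min_y Ŵ[x,y]) / ((1 − ε/7)·t) satisfies μ(x) ≤ μ̂(x) ≤ (1+ε)·μ(x). -/

import Mathlib

open scoped ENNReal

/-- A walk of length `t` in the graph: `t+1` vertices with consecutive ones joined by edges
(edges and vertices may repeat). -/
def IsWalk {n : ℕ} (E : Fin n → Fin n → Prop) {t : ℕ} (p : Fin (t + 1) → Fin n) : Prop :=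
  ∀ i : Fin t, E (p i.castSucc) (p i.succ)

/-- The weight of a walk: the sum of its edge weights. -/
def walkWeight {n : ℕ} (w : Fin n → Fin n → ℕ) {t : ℕ} (p : Fin (t + 1) → Fin n) : ℕ :=
  ∑ i : Fin t, w (p i.castSucc) (p i.succ)
/-- `y` is reachable from `x` (by a path of length ≥ 0). -/
def Reachable {n : ℕ} (E : Fin n → Fin n → Prop) (x y : Fin n) : Prop :=
  ∃ (t : ℕ) (p : Fin (t + 1) → Fin n), IsWalk E p ∧ p 0 = x ∧ p (Fin.last t) = y

/-- The set of mean weights of cycles reachable from `x`. -/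
def cycleMeans {n : ℕ} (E : Fin n → Fin n → Prop) (w : Fin n → Fin n → ℕ)
    (x : Fin n) : Set ℝ :=
  {q | ∃ (t : ℕ) (p : Fin (t + 1) → Fin n), 0 < t ∧ IsWalk E p ∧
    p (Fin.last t) = p 0 ∧ Reachable E x (p 0) ∧ q = (walkWeight w p : ℝ) / t}

/-- `mcm E w x` is `μ(x)`, the minimum mean weight over all cycles reachable from `x`. -/
noncomputable def mcm {n : ℕ} (E : Fin n → Fin n → Prop) (w : Fin n → Fin n → ℕ)
    (x : Fin n) : ℝ :=
  sInf (cycleMeans E w x)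
/-- The min-plus product of two matrices with entries in `[0, ∞]`. -/
noncomputable def minPlusE {n : ℕ} (A B : Matrix (Fin n) (Fin n) ℝ≥0∞) :
    Matrix (Fin n) (Fin n) ℝ≥0∞ :=
  fun i j => ⨅ k, A i k + B k j

/-- The `t`-th min-plus power of a matrix with entries in `[0, ∞]`. -/
noncomputable def minPlusPowE {n : ℕ} (D : Matrix (Fin n) (Fin n) ℝ≥0∞) :
    ℕ → Matrix (Fin n) (Fin n) ℝ≥0∞
  | 0 => fun i j => if i = j then 0 else ⊤
  | t + 1 => minPlusE D (minPlusPowE D t)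

/-- The weight matrix of the graph, viewed with entries in `[0, ∞]`:
`D[x,y] = w x y` if `(x,y)` is an edge, `∞` otherwise. -/
noncomputable def weightMatrixE {n : ℕ} (E : Fin n → Fin n → Prop) [DecidableRel E]
    (w : Fin n → Fin n → ℕ) : Matrix (Fin n) (Fin n) ℝ≥0∞ :=
  fun x y => if E x y then (w x y : ℝ≥0∞) else ⊤

/-! A walk of length `t` from `x` splits into cycles reachable from `x` and at most `n` further
steps, so its weight is at least `μ(x)(t - n)`. Conversely, `μ(x)` is attained by a cycle of length
at most `n`, and the walk that reaches this cycle in at most `n` steps and then winds around it has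
weight at most `tμ(x) + 2nW`. As `D^t[x,y]` is the least weight of a walk of length `t` from `x` to
`y`, the value `min_y Ŵ[x,y]` lies between `μ(x)(t - n)` and `(1 + ε/7)(tμ(x) + 2nW)`, and the
bounds on `t` and `μ(x)` turn this into the claim. -/

/-- `HasWalk E w x y t c`: some walk of length `t` from `x` to `y` has weight `c`. -/
def HasWalk {V : Type*} (E : V → V → Prop) (w : V → V → ℕ) (x y : V) (t c : ℕ) : Prop :=
  ∃ v : ℕ → V, (∀ k < t, E (v k) (v (k + 1))) ∧ v 0 = x ∧ v t = y ∧
    ∑ k ∈ Finset.range t, w (v k) (v (k + 1)) = c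

namespace HasWalk

variable {V : Type*} {E : V → V → Prop} {w : V → V → ℕ} {x y z : V} {s t ℓ a b c : ℕ}

variable (E w) in
theorem nil (x : V) : HasWalk E w x x 0 0 := ⟨fun _ => x, by simp, rfl, rfl, rfl⟩

theorem cons (hE : E x z) (h : HasWalk E w z y t c) : HasWalk E w x y (t + 1) (w x z + c) := by
  obtain ⟨v, hv, rfl, rfl, rfl⟩ := h
  refine ⟨fun k => if k = 0 then x else v (k - 1), fun k hk => ?_, rfl, by simp, ?_⟩
  · cases k with
    | zero => simpa using hE
    | succ k => simpa using hv k (by omega)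
  · rw [Finset.sum_range_succ']
    simp [add_comm]

theorem uncons (h : HasWalk E w x y (t + 1) c) :
    ∃ z c', E x z ∧ HasWalk E w z y t c' ∧ c = w x z + c' := by
  obtain ⟨v, hv, rfl, rfl, rfl⟩ := h
  refine ⟨v 1, _, hv 0 (by omega), ⟨fun k => v (k + 1), fun k hk => hv (k + 1) (by omega), rfl,
    rfl, rfl⟩, ?_⟩
  rw [Finset.sum_range_succ', add_comm]

theorem zero_iff : HasWalk E w x y 0 c ↔ x = y ∧ c = 0 := by
  constructor
  · rintro ⟨v, -, rfl, rfl, rfl⟩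
    simp
  · rintro ⟨rfl, rfl⟩
    exact nil E w x

theorem append (h₁ : HasWalk E w x y s a) (h₂ : HasWalk E w y z t b) :
    HasWalk E w x z (s + t) (a + b) := by
  induction s generalizing x a with
  | zero =>
    obtain ⟨rfl, rfl⟩ := zero_iff.mp h₁
    simpa using h₂
  | succ s ih =>
    obtain ⟨u, c', hE, h', rfl⟩ := h₁.uncons
    simpa [Nat.add_right_comm s 1 t, add_assoc] using (ih h').cons hE

theorem iterate (h : HasWalk E w z z ℓ c) (k : ℕ) : HasWalk E w z z (k * ℓ) (k * c) := by
  induction k with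
  | zero => simpa using nil E w z
  | succ k ih => simpa [add_mul] using ih.append h

theorem weight_le {W : ℕ} (hW : ∀ a b, E a b → w a b ≤ W) (h : HasWalk E w x y t c) :
    c ≤ t * W := by
  obtain ⟨v, hv, -, -, rfl⟩ := h
  simpa using Finset.sum_le_card_nsmul _ _ W fun k hk => hW _ _ (hv k (Finset.mem_range.mp hk))

end HasWalk

section Segments

variable {V : Type*} (E : V → V → Prop) (w : V → V → ℕ)

theorem hasWalk_Ico {v : ℕ → V} {t i j : ℕ} (hv : ∀ k < t, E (v k) (v (k + 1))) (hij : i ≤ j)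
    (hjt : j ≤ t) :
    HasWalk E w (v i) (v j) (j - i) (∑ k ∈ Finset.Ico i j, w (v k) (v (k + 1))) :=
  ⟨fun k => v (i + k), fun k hk => hv (i + k) (by omega), by simp,
    by simp [Nat.add_sub_cancel' hij], by simp [Finset.sum_Ico_eq_sum_range, add_assoc]⟩

variable {E w}

theorem HasWalk.split {x z : V} {s t c : ℕ} (h : HasWalk E w x z (s + t) c) :
    ∃ y a b, HasWalk E w x y s a ∧ HasWalk E w y z t b ∧ c = a + b := by
  obtain ⟨v, hv, rfl, rfl, rfl⟩ := h
  exact ⟨v s, _, _, by simpa using hasWalk_Ico E w hv (Nat.zero_le s) le_self_add,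
    by simpa using hasWalk_Ico E w hv le_self_add le_rfl,
    (Finset.sum_range_add_sum_Ico _ le_self_add).symm⟩

end Segments

section Cycles

variable {V : Type*} [Fintype V] {E : V → V → Prop} {w : V → V → ℕ} {x y z : V} {t c : ℕ}

variable (E w) in
def ShortCycleMeansGE (x : V) (q : ℝ) : Prop :=
  ∀ z s a ℓ b, HasWalk E w x z s a → HasWalk E w z z ℓ b → 0 < ℓ → ℓ ≤ Fintype.card V →
    q * ℓ ≤ b

theorem exists_lt_le_card_map_eq (v : ℕ → V) :
    ∃ i j, i < j ∧ j ≤ Fintype.card V ∧ v i = v j := by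
  obtain ⟨i, j, hne, heq⟩ := Fintype.exists_ne_map_eq_of_card_lt
    (fun k : Fin (Fintype.card V + 1) => v k) (by simp)
  rcases Fin.lt_or_lt_of_ne hne with h | h
  · exact ⟨i, j, h, Nat.lt_succ_iff.mp j.isLt, heq⟩
  · exact ⟨j, i, h, Nat.lt_succ_iff.mp i.isLt, heq.symm⟩

theorem HasWalk.exists_cycle_split (h : HasWalk E w x y t c) (ht : Fintype.card V ≤ t) :
    ∃ z s a ℓ b c', HasWalk E w x z s a ∧ HasWalk E w z z ℓ b ∧ 0 < ℓ ∧ ℓ ≤ Fintype.card V ∧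
      HasWalk E w x y (t - ℓ) c' ∧ c = b + c' := by
  obtain ⟨v, hv, rfl, rfl, rfl⟩ := h
  obtain ⟨i, j, hij, hj, hvij⟩ := exists_lt_le_card_map_eq v
  have hpre := hasWalk_Ico E w hv (Nat.zero_le i) (hij.le.trans (hj.trans ht))
  have hcyc := hasWalk_Ico E w hv hij.le (hj.trans ht)
  have hsuf := hasWalk_Ico E w hv (hj.trans ht) le_rfl
  rw [← hvij] at hcyc hsuf
  refine ⟨v i, _, _, j - i, _, ∑ k ∈ Finset.Ico 0 i, w (v k) (v (k + 1)) +
    ∑ k ∈ Finset.Ico j t, w (v k) (v (k + 1)), hpre, hcyc, by omega, by omega, ?_, ?_⟩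
  · convert hpre.append hsuf using 1
    omega
  · rw [Finset.range_eq_Ico,
      ← Finset.sum_Ico_consecutive _ (Nat.zero_le i) (hij.le.trans (hj.trans ht)),
      ← Finset.sum_Ico_consecutive _ hij.le (hj.trans ht)]
    ring

/-- Cut short cycles out of the walk until at most `card V` steps remain; each cut removes weight
at least `q` per step. -/
theorem HasWalk.exists_short_of_cycle_weight_ge {q : ℝ} {s₀ a₀ : ℕ}
    (h : HasWalk E w z y t c) (hz : HasWalk E w x z s₀ a₀) (hq : ShortCycleMeansGE E w x q) :
    ∃ s c', s ≤ Fintype.card V ∧ HasWalk E w z y s c' ∧ q * ((t : ℝ) - s) + c' ≤ c := by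
  induction t using Nat.strong_induction_on generalizing c with
  | _ t ih =>
  by_cases ht : t ≤ Fintype.card V
  · exact ⟨t, c, ht, h, by simp⟩
  obtain ⟨z', s, a, ℓ, b, c'', hz', hcyc, hℓ, hℓV, hrest, rfl⟩ := h.exists_cycle_split (by omega)
  obtain ⟨s', c', hs', hw', hle⟩ := ih (t - ℓ) (by omega) hrest
  refine ⟨s', c', hs', hw', ?_⟩
  have hcyc_weight := hq z' _ _ ℓ b (hz.append hz') hcyc hℓ hℓV
  push_cast [Nat.cast_sub (show ℓ ≤ t by omega)] at hle ⊢
  linarith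

theorem HasWalk.exists_length_le_card (h : HasWalk E w x y t c) :
    ∃ s c', s ≤ Fintype.card V ∧ HasWalk E w x y s c' := by
  obtain ⟨s, c', hs, h', -⟩ :=
    h.exists_short_of_cycle_weight_ge (q := 0) (.nil E w x) fun _ _ _ _ _ _ _ _ _ => by simp
  exact ⟨s, c', hs, h'⟩

theorem HasWalk.mul_sub_card_le_weight {q : ℝ} (h : HasWalk E w x y t c) (hq0 : 0 ≤ q)
    (hq : ShortCycleMeansGE E w x q) : q * ((t : ℝ) - Fintype.card V) ≤ c := by
  obtain ⟨s, c', hs, -, hle⟩ := h.exists_short_of_cycle_weight_ge (.nil E w x) hq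
  have hs' : (s : ℝ) ≤ Fintype.card V := by exact_mod_cast hs
  nlinarith [mul_nonneg hq0 (sub_nonneg.2 hs'), Nat.cast_nonneg (α := ℝ) c']

theorem HasWalk.mul_le_weight_of_cycle {q : ℝ} {s a : ℕ}
    (h : HasWalk E w z z t c) (hz : HasWalk E w x z s a) (hq : ShortCycleMeansGE E w x q) :
    q * t ≤ c := by
  obtain ⟨s', c', hs', h', hle⟩ := h.exists_short_of_cycle_weight_ge hz hq
  rcases Nat.eq_zero_or_pos s' with rfl | hpos
  · simp only [CharP.cast_eq_zero, sub_zero] at hle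
    linarith [Nat.cast_nonneg (α := ℝ) c']
  · linarith [hq z s a s' c' hz h' hpos hs']

end Cycles

theorem HasWalk.exists_walk_around_cycle {V : Type*} {E : V → V → Prop} {w : V → V → ℕ}
    {x z : V} {s a ℓ c W : ℕ} (hW : ∀ a b, E a b → w a b ≤ W) (hp : HasWalk E w x z s a)
    (hc : HasWalk E w z z ℓ c) (hℓ : 0 < ℓ) (t : ℕ) :
    ∃ y c', HasWalk E w x y t c' ∧ c' ≤ s * W + t / ℓ * c + ℓ * W := by
  by_cases hst : s ≤ t
  · obtain ⟨y, b, -, hpart, -, -⟩ :=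
      (show HasWalk E w z z ((t - s) % ℓ + (ℓ - (t - s) % ℓ)) c by
        rwa [Nat.add_sub_cancel' (Nat.mod_lt _ hℓ).le]).split
    have hwalk := hp.append ((hc.iterate ((t - s) / ℓ)).append hpart)
    rw [Nat.div_add_mod' (t - s) ℓ, Nat.add_sub_cancel' hst] at hwalk
    refine ⟨y, _, hwalk, ?_⟩
    have := Nat.mul_le_mul_right c (Nat.div_le_div_right (c := ℓ) (Nat.sub_le t s))
    have := hp.weight_le hW
    have := Nat.mul_le_mul_right W (Nat.mod_lt (t - s) hℓ).le
    have := hpart.weight_le hW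
    omega
  · obtain ⟨y, a', -, hpre, -, -⟩ :=
      (show HasWalk E w x z (t + (s - t)) a by rwa [Nat.add_sub_cancel' (by omega)]).split
    refine ⟨y, a', hpre, ?_⟩
    have := hpre.weight_le hW
    have := Nat.mul_le_mul_right W (show t ≤ s by omega)
    omega

section Graph

variable {n : ℕ} {E : Fin n → Fin n → Prop} {w : Fin n → Fin n → ℕ} {x y z : Fin n}

theorem IsWalk.hasWalk {t : ℕ} {p : Fin (t + 1) → Fin n} (hp : IsWalk E p) :
    HasWalk E w (p 0) (p (Fin.last t)) t (walkWeight w p) := by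
  have hclamp (i : Fin t) : Fin.clamp i t = i.castSucc ∧ Fin.clamp (i + 1) t = i.succ := by
    simp [Fin.ext_iff, Fin.clamp]
  refine ⟨fun k => p (Fin.clamp k t), fun k hk => ?_, rfl, by simp [Fin.clamp, Fin.last], ?_⟩
  · simpa [hclamp ⟨k, hk⟩] using hp ⟨k, hk⟩
  · rw [walkWeight,
      ← Fin.sum_univ_eq_sum_range (fun k => w (p (Fin.clamp k t)) (p (Fin.clamp (k + 1) t)))]
    simp [hclamp]

theorem HasWalk.exists_isWalk {t c : ℕ} (h : HasWalk E w x y t c) :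
    ∃ p : Fin (t + 1) → Fin n, IsWalk E p ∧ p 0 = x ∧ p (Fin.last t) = y ∧ walkWeight w p = c := by
  obtain ⟨v, hv, rfl, rfl, rfl⟩ := h
  exact ⟨fun i => v i, fun i => hv i i.isLt, rfl, rfl,
    by simpa [walkWeight] using Fin.sum_univ_eq_sum_range (fun k => w (v k) (v (k + 1))) t⟩

theorem reachable_iff_exists_hasWalk : Reachable E x y ↔ ∃ t c, HasWalk E w x y t c := by
  constructor
  · rintro ⟨t, p, hp, rfl, rfl⟩
    exact ⟨t, _, hp.hasWalk⟩
  · rintro ⟨t, c, h⟩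
    obtain ⟨p, hp, h0, hl, -⟩ := h.exists_isWalk
    exact ⟨t, p, hp, h0, hl⟩

theorem mem_cycleMeans_iff {q : ℝ} :
    q ∈ cycleMeans E w x ↔ ∃ z s a ℓ c, HasWalk E w x z s a ∧ HasWalk E w z z ℓ c ∧ 0 < ℓ ∧
      q = (c : ℝ) / ℓ := by
  constructor
  · rintro ⟨ℓ, p, hℓ, hp, hl, hr, rfl⟩
    obtain ⟨s, a, hr⟩ := (reachable_iff_exists_hasWalk (w := w)).mp hr
    have hc := hp.hasWalk (w := w)
    rw [hl] at hc
    exact ⟨p 0, s, a, ℓ, _, hr, hc, hℓ, rfl⟩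
  · rintro ⟨z, s, a, ℓ, c, hr, hc, hℓ, rfl⟩
    obtain ⟨p, hp, h0, hl, rfl⟩ := hc.exists_isWalk
    exact ⟨ℓ, p, hℓ, hp, hl.trans h0.symm, h0 ▸ reachable_iff_exists_hasWalk.mpr ⟨s, a, hr⟩, rfl⟩

theorem nonneg_of_mem_cycleMeans {q : ℝ} (hq : q ∈ cycleMeans E w x) : 0 ≤ q := by
  obtain ⟨z, s, a, ℓ, c, -, -, -, rfl⟩ := mem_cycleMeans_iff.mp hq
  positivity

theorem mcm_nonneg : 0 ≤ mcm E w x :=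
  Real.sInf_nonneg fun _ => nonneg_of_mem_cycleMeans

theorem mcm_mul_le_weight {s a ℓ c : ℕ} (hr : HasWalk E w x z s a) (hc : HasWalk E w z z ℓ c)
    (hℓ : 0 < ℓ) : mcm E w x * ℓ ≤ c := by
  rw [← le_div_iff₀ (by positivity)]
  exact csInf_le ⟨0, fun _ => nonneg_of_mem_cycleMeans⟩
    (mem_cycleMeans_iff.mpr ⟨z, s, a, ℓ, c, hr, hc, hℓ, rfl⟩)

theorem mcm_le_of_weight_le {W : ℕ} (hW : ∀ a b, E a b → w a b ≤ W)
    (hcyc : (cycleMeans E w x).Nonempty) : mcm E w x ≤ W := by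
  obtain ⟨q, hq⟩ := hcyc
  obtain ⟨z, s, a, ℓ, c, hr, hc, hℓ, rfl⟩ := mem_cycleMeans_iff.mp hq
  have hcW : (c : ℝ) ≤ ℓ * W := by exact_mod_cast hc.weight_le hW
  have := mcm_mul_le_weight hr hc hℓ
  nlinarith [(Nat.cast_pos (α := ℝ)).mpr hℓ]

/-- Short cycles have finitely many means (their weights are at most `nW`), and every cycle mean
is at least the least of them. -/
theorem exists_short_cycle_weight_le_mcm {W : ℕ} (hW : ∀ a b, E a b → w a b ≤ W)
    (hcyc : (cycleMeans E w x).Nonempty) :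
    ∃ z s a ℓ c, HasWalk E w x z s a ∧ HasWalk E w z z ℓ c ∧ 0 < ℓ ∧ ℓ ≤ n ∧
      (c : ℝ) ≤ mcm E w x * ℓ := by
  set S : Set (ℕ × ℕ) :=
    {p | 0 < p.1 ∧ p.1 ≤ n ∧ ∃ z s a, HasWalk E w x z s a ∧ HasWalk E w z z p.1 p.2}
  have hfin : S.Finite := ((Set.finite_Iic n).prod (Set.finite_Iic (n * W))).subset
    fun p ⟨_, hpn, _, _, _, _, hc⟩ => ⟨hpn, (hc.weight_le hW).trans (Nat.mul_le_mul_right W hpn)⟩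
  have hne : S.Nonempty := by
    obtain ⟨z, s, a, ℓ, c, hr, hc, hℓ, -⟩ := mem_cycleMeans_iff.mp hcyc.some_mem
    by_cases hℓn : ℓ ≤ n
    · exact ⟨(ℓ, c), hℓ, hℓn, z, s, a, hr, hc⟩
    · obtain ⟨z', s', a', ℓ', b, -, hr', hc', hℓ', hℓ'n, -⟩ :=
        hc.exists_cycle_split (by simp only [Fintype.card_fin]; omega)
      exact ⟨(ℓ', b), hℓ', by simpa using hℓ'n, z', _, _, hr.append hr', hc'⟩
  obtain ⟨⟨ℓ, c⟩, ⟨hℓ, hℓn, z, s, a, hr, hc⟩, hmin⟩ :=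
    S.exists_min_image (fun p => (p.2 : ℝ) / p.1) hfin hne
  refine ⟨z, s, a, ℓ, c, hr, hc, hℓ, hℓn, ?_⟩
  rw [← div_le_iff₀ (by positivity)]
  refine le_csInf hcyc fun q hq => ?_
  obtain ⟨z', s', a', ℓ', c', hr', hc', hℓ', rfl⟩ := mem_cycleMeans_iff.mp hq
  rw [le_div_iff₀ (by positivity)]
  refine hc'.mul_le_weight_of_cycle hr' fun z s a ℓ b hr hb hℓ hℓn => ?_
  rw [← le_div_iff₀ (by positivity)]
  exact hmin (ℓ, b) ⟨hℓ, by simpa using hℓn, z, s, a, hr, hb⟩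

variable [DecidableRel E]

theorem minPlusPowE_weightMatrixE (t : ℕ) (x y : Fin n) :
    minPlusPowE (weightMatrixE E w) t x y = ⨅ (c : ℕ) (_ : HasWalk E w x y t c), (c : ℝ≥0∞) := by
  induction t generalizing x with
  | zero =>
    simp only [minPlusPowE, HasWalk.zero_iff]
    split_ifs with h <;> simp [h]
  | succ t ih =>
    refine le_antisymm (le_iInf₂ fun c h => ?_) (le_iInf fun k => ?_)
    · obtain ⟨z, c', hE, h', rfl⟩ := h.uncons
      refine (iInf_le _ z).trans ?_
      simpa [weightMatrixE, hE, ih] using iInf₂_le c' h'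
    · by_cases hE : E x k
      · simp only [weightMatrixE, hE, if_true, ih, ENNReal.add_iInf]
        exact le_iInf₂ fun c h => (iInf₂_le _ (h.cons hE)).trans_eq (Nat.cast_add _ _)
      · simp [weightMatrixE, hE]

theorem ofReal_mcm_mul_sub_le_minPlusPowE (t : ℕ) (y : Fin n) :
    ENNReal.ofReal (mcm E w x * (t - n)) ≤ minPlusPowE (weightMatrixE E w) t x y := by
  rw [minPlusPowE_weightMatrixE]
  refine le_iInf₂ fun c h => ?_
  rw [← ENNReal.ofReal_natCast]
  refine ENNReal.ofReal_le_ofReal ?_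
  simpa using h.mul_sub_card_le_weight mcm_nonneg
    fun z s a ℓ b hr hb hℓ _ => mcm_mul_le_weight hr hb hℓ

theorem exists_minPlusPowE_le_ofReal {W : ℕ} (hW : ∀ a b, E a b → w a b ≤ W)
    (hcyc : (cycleMeans E w x).Nonempty) (t : ℕ) :
    ∃ y, minPlusPowE (weightMatrixE E w) t x y ≤ ENNReal.ofReal (t * mcm E w x + 2 * n * W) := by
  obtain ⟨z, s, a, ℓ, c, hr, hc, hℓ, hℓn, hcμ⟩ := exists_short_cycle_weight_le_mcm hW hcyc
  obtain ⟨s, a, hs, hr⟩ := hr.exists_length_le_card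
  obtain ⟨y, c', hwalk, hc'⟩ := hr.exists_walk_around_cycle hW hc hℓ t
  refine ⟨y, ?_⟩
  rw [minPlusPowE_weightMatrixE]
  refine (iInf₂_le c' hwalk).trans ?_
  rw [← ENNReal.ofReal_natCast]
  refine ENNReal.ofReal_le_ofReal ?_
  have hμ0 : 0 ≤ mcm E w x := mcm_nonneg
  have hdiv : ((t / ℓ : ℕ) : ℝ) * ℓ ≤ t := by exact_mod_cast Nat.div_mul_le_self t ℓ
  have hs' : (s : ℝ) ≤ n := by exact_mod_cast hs.trans_eq (Fintype.card_fin n)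
  have hℓn' : (ℓ : ℝ) ≤ n := by exact_mod_cast hℓn
  have hc'' : (c' : ℝ) ≤ s * W + (t / ℓ : ℕ) * c + ℓ * W := by exact_mod_cast hc'
  nlinarith [mul_le_mul_of_nonneg_left hcμ (Nat.cast_nonneg (α := ℝ) (t / ℓ)),
    mul_le_mul_of_nonneg_left hdiv hμ0,
    mul_le_mul_of_nonneg_right hs' (Nat.cast_nonneg (α := ℝ) W),
    mul_le_mul_of_nonneg_right hℓn' (Nat.cast_nonneg (α := ℝ) W)]

end Graph

/-- The error terms are small because `nμ ≥ 1` and `7n²W ≤ εt` give `n ≤ εt/7` and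
`nW ≤ εtμ/7`. -/
theorem approx_mean_bounds {n W μ ε t m : ℝ} (hn : 0 < n) (hmu : 1 / n ≤ μ) (hμW : μ ≤ W)
    (hε0 : 0 < ε) (hε1 : ε ≤ 1) (ht : 7 * n ^ 2 * W / ε ≤ t) (hlo : μ * (t - n) ≤ m)
    (hhi : m ≤ (1 + ε / 7) * (t * μ + 2 * n * W)) :
    μ ≤ m / ((1 - ε / 7) * t) ∧ m / ((1 - ε / 7) * t) ≤ (1 + ε) * μ := by
  have hnμ : 1 ≤ n * μ := by rwa [div_le_iff₀ hn, mul_comm] at hmu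
  have hεt : 7 * n ^ 2 * W ≤ ε * t := by rw [div_le_iff₀ hε0] at ht; linarith
  have hμ : 0 < μ := lt_of_lt_of_le (by positivity) hmu
  have hnW1 : 1 ≤ n * W := by nlinarith
  have hnW : n * W ≤ ε * t * μ / 7 := by
    nlinarith [mul_le_mul_of_nonneg_left hnμ (by positivity : (0 : ℝ) ≤ n * W),
      mul_le_mul_of_nonneg_right hεt hμ.le]
  have hnt : n ≤ ε * t / 7 := by nlinarith [mul_le_mul_of_nonneg_left hnW1 hn.le]
  have ht0 : 0 < t := by nlinarith
  have hA : 0 < (1 - ε / 7) * t := mul_pos (by linarith) ht0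
  constructor
  · rw [le_div_iff₀ hA]
    nlinarith
  · rw [div_le_iff₀ hA]
    calc m ≤ (1 + ε / 7) * (t * μ + 2 * n * W) := hhi
      _ ≤ (1 + ε / 7) * (1 + 2 * ε / 7) * (t * μ) := by nlinarith
      _ ≤ (1 + ε) * (1 - ε / 7) * (t * μ) := by gcongr ?_ * _; nlinarith
      _ = (1 + ε) * μ * ((1 - ε / 7) * t) := by ring

theorem approx_mcm_from_approx_power_general {n : ℕ} (E : Fin n → Fin n → Prop) [DecidableRel E]
    (w : Fin n → Fin n → ℕ)
    (W : ℕ) (hW : ∀ a b : Fin n, E a b → w a b ≤ W)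
    (x : Fin n) (hcyc : (cycleMeans E w x).Nonempty)
    (ε : ℝ) (hε0 : 0 < ε) (hε1 : ε ≤ 1)
    (hmu : 1 / (n : ℝ) ≤ mcm E w x)
    (t : ℕ) (ht : 7 * (n : ℝ) ^ 2 * (W : ℝ) / ε ≤ (t : ℝ))
    (What : Matrix (Fin n) (Fin n) ℝ≥0∞)
    (hWhat : ∀ y : Fin n,
      minPlusPowE (weightMatrixE E w) t x y ≤ What x y ∧
      What x y ≤ ENNReal.ofReal (1 + ε / 7) * minPlusPowE (weightMatrixE E w) t x y) :
    mcm E w x ≤ (⨅ y : Fin n, What x y).toReal / ((1 - ε / 7) * (t : ℝ)) ∧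
    (⨅ y : Fin n, What x y).toReal / ((1 - ε / 7) * (t : ℝ)) ≤ (1 + ε) * mcm E w x := by
  set μ := mcm E w x
  set m := ⨅ y : Fin n, What x y
  have hμ0 : 0 ≤ μ := mcm_nonneg
  have hlo : ENNReal.ofReal (μ * (t - n)) ≤ m :=
    le_iInf fun y => (ofReal_mcm_mul_sub_le_minPlusPowE t y).trans (hWhat y).1
  obtain ⟨y, hy⟩ := exists_minPlusPowE_le_ofReal hW hcyc t
  have hup : m ≤ ENNReal.ofReal ((1 + ε / 7) * (t * μ + 2 * n * W)) := by
    rw [ENNReal.ofReal_mul (by linarith)]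
    exact (iInf_le _ y).trans ((hWhat y).2.trans (by gcongr))
  have hm : m ≠ ⊤ := ne_top_of_le_ne_top ENNReal.ofReal_ne_top hup
  exact approx_mean_bounds (by exact_mod_cast x.pos) hmu (mcm_le_of_weight_le hW hcyc) hε0 hε1 ht
    ((ENNReal.ofReal_le_iff_le_toReal hm).mp hlo)
    ((ENNReal.le_ofReal_iff_toReal_le hm (by positivity)).mp hup)

/-- Let `0 < ε ≤ 1`, let `x` be a vertex with `μ(x) ≥ 1/n`, let `t` be an
integer with `t ≥ 7·n²·W/ε`, and let `Ŵ` be a matrix with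
`D^t[x,y] ≤ Ŵ[x,y] ≤ (1 + ε/7)·D^t[x,y]` for all `y`. Then
`μ̂(x) := (min_y Ŵ[x,y]) / ((1 − ε/7)·t)` satisfies `μ(x) ≤ μ̂(x) ≤ (1+ε)·μ(x)`. -/
theorem approx_mcm_from_approx_power {n : ℕ} (E : Fin n → Fin n → Prop) [DecidableRel E]
    (w : Fin n → Fin n → ℕ) (hout : ∀ v : Fin n, ∃ u : Fin n, E v u)
    (W : ℕ) (hW : ∀ a b : Fin n, E a b → w a b ≤ W)
    (x : Fin n) (hcyc : (cycleMeans E w x).Nonempty)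
    (ε : ℝ) (hε0 : 0 < ε) (hε1 : ε ≤ 1)
    (hmu : 1 / (n : ℝ) ≤ mcm E w x)
    (t : ℕ) (ht : 7 * (n : ℝ) ^ 2 * (W : ℝ) / ε ≤ (t : ℝ))
    (What : Matrix (Fin n) (Fin n) ℝ≥0∞)
    (hWhat : ∀ y : Fin n,
      minPlusPowE (weightMatrixE E w) t x y ≤ What x y ∧
      What x y ≤ ENNReal.ofReal (1 + ε / 7) * minPlusPowE (weightMatrixE E w) t x y) :
    mcm E w x ≤ (⨅ y : Fin n, What x y).toReal / ((1 - ε / 7) * (t : ℝ)) ∧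
    (⨅ y : Fin n, What x y).toReal / ((1 - ε / 7) * (t : ℝ)) ≤ (1 + ε) * mcm E w x :=
  approx_mcm_from_approx_power_general E w W hW x hcyc ε hε0 hε1 hmu t ht What hWhat
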